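/- arXiv:2011.04742 — 6 statements merged into one kernel-verified Lean document; each statement's English description precedes it below -/
import Mathlib

section
/- Let (a_r) be a sequence of integers with a_1 = 0, and suppose P(x) = (1-x)^2 Σ_{r≥1} a_{r+1} x^r is a polynomial with a_{r+1} = a_r + K for all r ≥ e (e minimal with this property). Then P'(1) = e·K − a_e. -/
/-!
Once `a` is arithmetic with step `K` from index `e` on, the coefficients `a (r + 1)` agree for
`r ≥ e` with the arithmetic sequence `α + r K`, `α = a e + (1 - e) K`. Since
`(1 - X)^2 Σ (α + r K) X^r = α (1 - X) + K X`, the polynomial `p` is `α (1 - X) + K X` plus a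
multiple of `(1 - X)^2`, and the latter has vanishing derivative at `1`. Hence
`p'(1) = K - α = e K - a e`.
-/

open Polynomial PowerSeries

namespace PowerSeries

variable {R : Type*} [CommRing R]

theorem one_sub_X_mul_mk (f : ℕ → R) :
    (1 - X) * mk f = C (f 0) + X * mk fun n => f (n + 1) - f n := by
  ext (_ | n)
  · simp
  · simp [sub_mul, coeff_succ_X_mul]

theorem one_sub_X_sq_mul_mk_add_mul (α K : R) :
    (1 - X) ^ 2 * mk (fun n => α + n * K) = C α * (1 - X) + C K * X := by
  have hconst : (1 - X) * mk (fun _ => K) = C K := by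
    ext (_ | n) <;> simp [sub_mul, coeff_succ_X_mul]
  have hdiff : (1 - X) * mk (fun n => α + n * K) = C α + X * mk fun _ => K := by
    rw [one_sub_X_mul_mk]
    simp only [Nat.cast_zero, zero_mul, add_zero, Nat.cast_add, Nat.cast_one]
    ring_nf
  calc (1 - X) ^ 2 * mk (fun n => α + n * K)
      = (1 - X) * (C α + X * mk fun _ => K) := by rw [sq, mul_assoc, hdiff]
    _ = C α * (1 - X) + X * ((1 - X) * mk fun _ => K) := by ring
    _ = C α * (1 - X) + C K * X := by rw [hconst, mul_comm X]

theorem coe_trunc_of_coeff_eq_zero {φ : R⟦X⟧} {n : ℕ} (h : ∀ m ≥ n, coeff m φ = 0) :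
    (trunc n φ : R⟦X⟧) = φ := by
  ext m
  rw [Polynomial.coeff_coe, coeff_trunc]
  split_ifs with hm
  · rfl
  · exact (h m (not_lt.mp hm)).symm

end PowerSeries

theorem Polynomial.eval_one_derivative_one_sub_X_sq_mul {R : Type*} [CommRing R] (U : R[X]) :
    (derivative ((1 - X) ^ 2 * U)).eval 1 = 0 := by
  simp [derivative_pow]

theorem eq_add_nsmul_of_succ_eq_add {M : Type*} [AddMonoid M] {a : ℕ → M} {K : M} {e : ℕ}
    (he : ∀ r ≥ e, a (r + 1) = a r + K) {n : ℕ} (hn : e ≤ n) : a n = a e + (n - e) • K := by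
  induction n, hn using Nat.le_induction with
  | base => simp
  | succ n hn ih => rw [he n hn, ih, add_assoc, Nat.sub_add_comm hn, succ_nsmul]

theorem Polynomial.eval_one_derivative_of_coe_eq_one_sub_X_sq_mul {R : Type*} [CommRing R]
    (a : ℕ → R) (K : R) (e : ℕ) (he : ∀ r ≥ e, a (r + 1) = a r + K) (p : R[X])
    (hp : (p : R⟦X⟧) = (1 - PowerSeries.X) ^ 2 * mk (fun r => a (r + 1))) :
    (derivative p).eval 1 = e * K - a e := by
  set α := a e + (1 - e) * K
  set u : ℕ → R := fun r => a (r + 1) - (α + r * K)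
  have hu : ∀ r ≥ e, PowerSeries.coeff r (mk u) = 0 := by
    intro r hr
    rw [coeff_mk]
    simp only [u, α]
    rw [eq_add_nsmul_of_succ_eq_add he (by omega : e ≤ r + 1),
      nsmul_eq_mul, Nat.cast_sub (by omega)]
    push_cast
    ring
  have hsplit : mk (fun r => a (r + 1)) =
      mk (fun r => α + r * K) + (trunc e (mk u) : R⟦X⟧) := by
    rw [coe_trunc_of_coeff_eq_zero hu]
    ext r
    simp [u]
  have hp' : p = C α * (1 - X) + C K * X + (1 - X) ^ 2 * trunc e (mk u) := by
    apply Polynomial.coe_injective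
    rw [hp, hsplit, mul_add, one_sub_X_sq_mul_mk_add_mul]
    push_cast
    rfl
  rw [hp', derivative_add, eval_add, eval_one_derivative_one_sub_X_sq_mul]
  simp [α]
  ring

theorem stmt2_general (a : ℕ → ℤ) (K : ℤ) (e : ℕ)
    (he : ∀ r ≥ e, a (r + 1) = a r + K)
    (p : Polynomial ℤ)
    (hp : (p : PowerSeries ℤ) =
      (1 - PowerSeries.X) ^ 2 * PowerSeries.mk (fun r => a (r + 1))) :
    (Polynomial.derivative p).eval 1 = (e : ℤ) * K - a e :=
  eval_one_derivative_of_coe_eq_one_sub_X_sq_mul a K e he p hp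

/-- If `a 1 = 0`, `p` is a polynomial whose power series equals
`(1-x)^2 Σ_{r≥1} a_{r+1} x^r`, and `a (r+1) = a r + K` for all `r ≥ e` with `e`
minimal such, then `p'(1) = e·K − a e`. -/
theorem stmt2 (a : ℕ → ℤ) (ha1 : a 1 = 0) (K : ℤ) (e : ℕ) (he1 : 1 ≤ e)
    (he : ∀ r ≥ e, a (r + 1) = a r + K)
    (hmin : ∀ s : ℕ, 1 ≤ s → (∀ r ≥ s, a (r + 1) = a r + K) → e ≤ s)
    (p : Polynomial ℤ)
    (hp : (p : PowerSeries ℤ) =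
      (1 - PowerSeries.X) ^ 2 * PowerSeries.mk (fun r => a (r + 1))) :
    (Polynomial.derivative p).eval 1 = (e : ℤ) * K - a e :=
  stmt2_general a K e he p hp
end

section
/- Let X = ∏_{i=1}^n X_i and for each i let {_iU_j}_{j=0}^S be a (k_i+1)-cover of X_i, where S = Σ_{i=1}^n k_i (i.e., any k_i+1 of the sets _iU_0,…,_iU_S cover X_i). Then the sets W_j = ∏_{i=1}^n {_iU_j}, for j = 0, 1, …, S, cover X. -/
/-!
For a point `x`, the indices `j` with `x i ∉ U i j` number at most `k i`, since any `k i + 1`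
of the sets `U i j` cover `X i`. Altogether at most `∑ i, k i = S` indices are bad for some
coordinate, so one of the `S + 1` indices is good for every coordinate.
-/

open Finset

theorem Finset.card_filter_notMem_le_of_forall_card_eq_cover {α ι : Type*} [Fintype ι]
    {U : ι → Set α} {k : ℕ}
    (hcov : ∀ s : Finset ι, #s = k + 1 → ⋃ j ∈ s, U j = Set.univ) (x : α)
    [DecidablePred fun j => x ∉ U j] :
    #{j | x ∉ U j} ≤ k := by
  by_contra! hlt
  obtain ⟨s, hs, hcard⟩ := exists_subset_card_eq hlt
  obtain ⟨j, hj, hxj⟩ := Set.mem_iUnion₂.mp (hcov s hcard ▸ Set.mem_univ x)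
  exact (mem_filter.mp (hs hj)).2 hxj

theorem Finset.exists_forall_notMem_of_sum_card_lt {ι β : Type*} [Fintype ι] [Fintype β]
    [DecidableEq β] (B : ι → Finset β) (h : ∑ i, #(B i) < Fintype.card β) :
    ∃ j, ∀ i, j ∉ B i := by
  obtain ⟨j, -, hj⟩ := exists_mem_notMem_of_card_lt_card
    (card_biUnion_le.trans_lt (h.trans_eq (card_univ (α := β)).symm))
  exact ⟨j, fun i hi => hj (mem_biUnion.mpr ⟨i, mem_univ i, hi⟩)⟩

theorem stmt6_general {n : ℕ} (X : Fin n → Type*)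
    (k : Fin n → ℕ) (S : ℕ) (hS : S = ∑ i, k i)
    (U : ∀ i : Fin n, Fin (S + 1) → Set (X i))
    (hcov : ∀ i : Fin n, ∀ s : Finset (Fin (S + 1)), s.card = k i + 1 →
      (⋃ j ∈ s, U i j) = Set.univ) :
    ∀ x : (∀ i, X i), ∃ j : Fin (S + 1), ∀ i, x i ∈ U i j := by
  classical
  intro x
  have hbad : ∑ i, #{j | x i ∉ U i j} < Fintype.card (Fin (S + 1)) := by
    calc ∑ i, #{j | x i ∉ U i j}
        ≤ ∑ i, k i := sum_le_sum fun i _ =>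
          card_filter_notMem_le_of_forall_card_eq_cover (hcov i) (x i)
      _ < S + 1 := by omega
      _ = Fintype.card (Fin (S + 1)) := (Fintype.card_fin _).symm
  obtain ⟨j, hj⟩ := exists_forall_notMem_of_sum_card_lt _ hbad
  exact ⟨j, fun i => by simpa using hj i⟩

/-- Let `X = ∏_{i=1}^n X_i`, and for each `i` let
`U i 0, …, U i S` be a `(k_i + 1)`-cover of `X_i`, where `S = Σ_i k_i`.
Then the product sets `W_j = ∏_i U i j`, `j = 0, …, S`, cover `X`. -/
theorem stmt6 {n : ℕ} (X : Fin n → Type*) [∀ i, TopologicalSpace (X i)]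
    (k : Fin n → ℕ) (S : ℕ) (hS : S = ∑ i, k i)
    (U : ∀ i : Fin n, Fin (S + 1) → Set (X i))
    (hopen : ∀ i j, IsOpen (U i j))
    (hcov : ∀ i : Fin n, ∀ s : Finset (Fin (S + 1)), s.card = k i + 1 →
      (⋃ j ∈ s, U i j) = Set.univ) :
    ∀ x : (∀ i, X i), ∃ j : Fin (S + 1), ∀ i, x i ∈ U i j :=
  stmt6_general X k S hS U hcov
end

section
/- For n ≥ 2, let 𝒪_n be the graph with vertex set V ∪ W where V = {v_1,…,v_n} spans a complete graph K_n and W = {w_1,…,w_n} are additional vertices, and each w_i is adjacent to all vertices of V except v_i (and to no w_j). Then for 2 ≤ r ≤ n−1, z_r(𝒪_n) = (r−1)n + r; moreover z_r(𝒪_n) = rn for all r ≥ n. -/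
noncomputable def zr {V : Type*} [Fintype V] [DecidableEq V] (G : SimpleGraph V)
    (r : ℕ) : ℕ :=
  sSup {m | ∃ C : Fin r → Finset V, (∀ i, G.IsClique (C i : Set V)) ∧
    Finset.univ.inf C = ∅ ∧ m = ∑ i, (C i).card}

/-- The graph `𝒪_n`: vertices `inl i = v_i` (spanning a complete graph `K_n`)
and `inr i = w_i`, with `w_i` adjacent exactly to the `v_j` with `j ≠ i`,
and no edges among the `w_i`. -/
def On (n : ℕ) : SimpleGraph (Fin n ⊕ Fin n) :=
  SimpleGraph.fromRel (fun a b =>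
    match a, b with
    | Sum.inl _, Sum.inl _ => True
    | Sum.inl i, Sum.inr j => i ≠ j
    | Sum.inr i, Sum.inl j => i ≠ j
    | Sum.inr _, Sum.inr _ => False)

/-!
Every clique of `𝒪_n` contains at most one `w_i`, and if cliques `C_1, …, C_r` have empty
intersection then each `v_j` is missed by one of them, so their traces on `V` have total size at
most `(r - 1) n`; hence `∑ |C_i| ≤ (r - 1) n + r`. For `r ≥ n` the bound `r n` coming from
`|C| ≤ n` is sharper. Both bounds are attained: for `r ≥ n` by cycling through the maximal cliques
`(V ∖ {v_i}) ∪ {w_i}`, and for `r < n` by `r - 1` of them together with `{v_1, …, v_{r-1}, w_r}`.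
-/

open Finset

lemma zr_eq_of_le_of_exists {V : Type*} [Fintype V] [DecidableEq V] {G : SimpleGraph V}
    {r m : ℕ}
    (hle : ∀ C : Fin r → Finset V, (∀ i, G.IsClique (C i : Set V)) → (∀ v, ∃ i, v ∉ C i) →
      ∑ i, #(C i) ≤ m)
    (hex : ∃ C : Fin r → Finset V, (∀ i, G.IsClique (C i : Set V)) ∧ (∀ v, ∃ i, v ∉ C i) ∧
      ∑ i, #(C i) = m) :
    zr G r = m := by
  have inf_eq_empty_iff (C : Fin r → Finset V) : univ.inf C = ∅ ↔ ∀ v, ∃ i, v ∉ C i := by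
    simp [eq_empty_iff_forall_notMem, mem_inf]
  obtain ⟨C, hC, hcov, hsum⟩ := hex
  refine IsGreatest.csSup_eq ⟨⟨C, hC, (inf_eq_empty_iff C).2 hcov, hsum.symm⟩, ?_⟩
  rintro _ ⟨D, hD, hDinf, rfl⟩
  exact hle D hD ((inf_eq_empty_iff D).1 hDinf)

lemma Finset.sum_card_le_of_forall_exists_notMem {ι α : Type*} [Fintype ι] [Fintype α]
    (s : ι → Finset α) (h : ∀ a, ∃ i, a ∉ s i) :
    ∑ i, #(s i) ≤ Fintype.card α * (Fintype.card ι - 1) := by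
  classical
  calc ∑ i, #(s i) = ∑ a, #{i | a ∈ s i} := by
        simpa [bipartiteAbove, bipartiteBelow] using
          sum_card_bipartiteAbove_eq_sum_card_bipartiteBelow (s := univ) (t := univ)
            (fun i a => a ∈ s i)
    _ ≤ ∑ _a : α, (Fintype.card ι - 1) := by
        gcongr with a
        obtain ⟨i, hi⟩ := h a
        have := card_lt_univ_of_notMem (s := {i | a ∈ s i}) (x := i) (by simpa using hi)
        omega
    _ = Fintype.card α * (Fintype.card ι - 1) := by simp

lemma SimpleGraph.card_toRight_le_one_of_isClique {α β : Type*} {G : SimpleGraph (α ⊕ β)}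
    (hβ : ∀ b b', ¬ G.Adj (.inr b) (.inr b')) {C : Finset (α ⊕ β)}
    (hC : G.IsClique (C : Set (α ⊕ β))) : #C.toRight ≤ 1 :=
  card_le_one.2 fun b hb b' hb' => by_contra fun hne =>
    hβ b b' (hC (mem_toRight.1 hb) (mem_toRight.1 hb') (by simpa using hne))

lemma SimpleGraph.sum_card_le_of_isClique {ι α β : Type*} [Fintype ι] [Fintype α]
    {G : SimpleGraph (α ⊕ β)} (hβ : ∀ b b', ¬ G.Adj (.inr b) (.inr b'))
    (C : ι → Finset (α ⊕ β)) (hC : ∀ i, G.IsClique (C i : Set (α ⊕ β)))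
    (hcov : ∀ x, ∃ i, x ∉ C i) :
    ∑ i, #(C i) ≤ (Fintype.card ι - 1) * Fintype.card α + Fintype.card ι := by
  have hleft := sum_card_le_of_forall_exists_notMem (fun i => (C i).toLeft)
    fun a => by simpa using hcov (.inl a)
  calc ∑ i, #(C i) = ∑ i, #(C i).toLeft + ∑ i, #(C i).toRight := by
        simp only [← sum_add_distrib, card_toLeft_add_card_toRight]
    _ ≤ Fintype.card α * (Fintype.card ι - 1) + ∑ _i : ι, 1 :=
        add_le_add hleft (sum_le_sum fun i _ => card_toRight_le_one_of_isClique hβ (hC i))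
    _ = (Fintype.card ι - 1) * Fintype.card α + Fintype.card ι := by simp [mul_comm]

namespace On

variable {n : ℕ}

@[simp] lemma adj_inl_inl {i j : Fin n} : (On n).Adj (.inl i) (.inl j) ↔ i ≠ j := by
  simp [On]

@[simp] lemma adj_inl_inr {i j : Fin n} : (On n).Adj (.inl i) (.inr j) ↔ i ≠ j := by
  simpa [On] using Ne.symm

@[simp] lemma adj_inr_inl {i j : Fin n} : (On n).Adj (.inr i) (.inl j) ↔ i ≠ j := by
  simpa [On] using Ne.symm

lemma not_adj_inr_inr (i j : Fin n) : ¬ (On n).Adj (.inr i) (.inr j) := by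
  simp [On]

lemma isClique_disjSum_singleton {S : Finset (Fin n)} {k : Fin n} (hk : k ∉ S) :
    (On n).IsClique (S.disjSum {k} : Set (Fin n ⊕ Fin n)) := by
  rintro (a | a) ha (b | b) hb hab <;> simp_all <;> rintro rfl <;> contradiction

lemma card_le_of_isClique {C : Finset (Fin n ⊕ Fin n)} (hC : (On n).IsClique (C : Set _)) :
    #C ≤ n := by
  rw [← card_toLeft_add_card_toRight]
  obtain hR | ⟨a, ha⟩ := C.toRight.eq_empty_or_nonempty
  · simpa [hR] using card_le_univ C.toLeft
  have hL : C.toLeft ⊆ univ.erase a := fun b hb => mem_erase.2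
    ⟨by rintro rfl; simpa using hC (mem_toLeft.1 hb) (mem_toRight.1 ha), mem_univ b⟩
  have := card_le_card hL
  have := SimpleGraph.card_toRight_le_one_of_isClique not_adj_inr_inr hC
  have := a.pos
  simp_all
  omega

def maxClique (j : Fin n) : Finset (Fin n ⊕ Fin n) :=
  (univ.erase j).disjSum {j}

lemma isClique_maxClique (j : Fin n) : (On n).IsClique (maxClique j : Set (Fin n ⊕ Fin n)) :=
  isClique_disjSum_singleton (notMem_erase j univ)

lemma card_maxClique (j : Fin n) : #(maxClique j) = n := by
  have := j.pos
  simp [maxClique, card_disjSum]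
  omega

lemma exists_notMem_maxClique_comp {ι : Type*} {f : ι → Fin n} (hf : f.Surjective)
    (hn : 2 ≤ n) (x : Fin n ⊕ Fin n) : ∃ i, x ∉ maxClique (f i) := by
  rcases x with j | j
  · obtain ⟨i, rfl⟩ := hf j
    exact ⟨i, by simp [maxClique]⟩
  · have := Fin.nontrivial_iff_two_le.2 hn
    obtain ⟨k, hk⟩ := exists_ne j
    obtain ⟨i, rfl⟩ := hf k
    exact ⟨i, by simp [maxClique, hk.symm]⟩

lemma exists_cliques_sum_eq_of_lt {s : ℕ} (hs : 1 ≤ s) (hsn : s < n) :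
    ∃ C : Fin (s + 1) → Finset (Fin n ⊕ Fin n), (∀ i, (On n).IsClique (C i : Set _)) ∧
      (∀ x, ∃ i, x ∉ C i) ∧ ∑ i, #(C i) = s * n + (s + 1) := by
  let k : Fin n := ⟨s, hsn⟩
  let f : Fin s → Fin n := Fin.castLE hsn.le
  refine ⟨Fin.lastCases ((Iio k).disjSum {k}) fun i => maxClique (f i), ?_, ?_, ?_⟩
  · refine Fin.lastCases ?_ fun i => ?_
    · simpa using isClique_disjSum_singleton (notMem_Iio_self (b := k))
    · simpa using isClique_maxClique (f i)
  · rintro (j | j)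
    · by_cases hj : (j : ℕ) < s
      · exact ⟨(⟨j, hj⟩ : Fin s).castSucc, by
          simp only [Fin.lastCases_castSucc]; simp [maxClique, f]⟩
      · exact ⟨Fin.last s, by simp [k, Fin.lt_def]; omega⟩
    · by_cases hj : j = k
      · exact ⟨(⟨0, hs⟩ : Fin s).castSucc, by
          simp only [Fin.lastCases_castSucc]; simp [maxClique, hj, f, k, Fin.ext_iff]; omega⟩
      · exact ⟨Fin.last s, by simp [hj]⟩
  · simp [Fin.sum_univ_castSucc, card_maxClique, card_disjSum, k]

lemma exists_cliques_sum_eq_of_le {r : ℕ} (hn : 2 ≤ n) (hr : n ≤ r) :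
    ∃ C : Fin r → Finset (Fin n ⊕ Fin n), (∀ i, (On n).IsClique (C i : Set _)) ∧
      (∀ x, ∃ i, x ∉ C i) ∧ ∑ i, #(C i) = r * n := by
  let f : Fin r → Fin n := fun i => ⟨i % n, Nat.mod_lt _ (by omega)⟩
  have hf : f.Surjective := fun j => ⟨Fin.castLE hr j, Fin.ext (Nat.mod_eq_of_lt j.2)⟩
  exact ⟨fun i => maxClique (f i), fun i => isClique_maxClique _,
    exists_notMem_maxClique_comp hf hn, by simp [card_maxClique]⟩

end On

/-- For `n ≥ 2`, `z_r(𝒪_n) = (r−1)n + r` for `2 ≤ r ≤ n−1`,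
and `z_r(𝒪_n) = rn` for all `r ≥ n`. -/
theorem stmt10 (n : ℕ) (hn : 2 ≤ n) :
    (∀ r : ℕ, 2 ≤ r → r ≤ n - 1 → zr (On n) r = (r - 1) * n + r) ∧
    (∀ r : ℕ, n ≤ r → zr (On n) r = r * n) := by
  constructor
  · intro r hr2 hrn
    obtain ⟨s, rfl⟩ : ∃ s, r = s + 1 := ⟨r - 1, by omega⟩
    refine zr_eq_of_le_of_exists (fun C hC hcov => ?_)
      (On.exists_cliques_sum_eq_of_lt (by omega) (by omega))
    simpa using SimpleGraph.sum_card_le_of_isClique On.not_adj_inr_inr C hC hcov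
  · intro r hr
    refine zr_eq_of_le_of_exists (fun C hC _ => ?_) (On.exists_cliques_sum_eq_of_le hn hr)
    calc ∑ i, #(C i) ≤ ∑ _i : Fin r, n := sum_le_sum fun i _ => On.card_le_of_isClique (hC i)
      _ = r * n := by simp
end

section
/- Let Γ_1 and Γ_2 be simplicial graphs on disjoint vertex sets and let Γ_1 * Γ_2 be their join (every vertex of Γ_1 adjacent to every vertex of Γ_2). Then for every r ≥ 2, z_r(Γ_1 * Γ_2) = z_r(Γ_1) + z_r(Γ_2). -/
/-- The join `Γ₁ * Γ₂` of two graphs on disjoint vertex sets: keep the edges of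
each graph and add all edges between the two vertex sets. -/
def graphJoin {α β : Type*} (G : SimpleGraph α) (H : SimpleGraph β) :
    SimpleGraph (α ⊕ β) :=
  SimpleGraph.fromRel (fun a b =>
    match a, b with
    | Sum.inl x, Sum.inl y => G.Adj x y
    | Sum.inl _, Sum.inr _ => True
    | Sum.inr _, Sum.inl _ => True
    | Sum.inr x, Sum.inr y => H.Adj x y)

/-!
A clique of `Γ₁ * Γ₂` is `C ⊔ D` for unique cliques `C` of `Γ₁` and `D` of `Γ₂`, and this
splitting commutes with intersections and adds sizes. Hence the sums `Σ |Cᵢ|` realised by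
`r` cliques with empty intersection in the join are exactly the sums of one such value for
`Γ₁` and one for `Γ₂`, and the maxima add.
-/

open Finset
open scoped Pointwise

theorem Nat.sSup_add {s t : Set ℕ} (hs₀ : s.Nonempty) (hs₁ : BddAbove s) (ht₀ : t.Nonempty)
    (ht₁ : BddAbove t) : sSup (s + t) = sSup s + sSup t := by
  have hbound : sSup s + sSup t ∈ upperBounds (s + t) := by
    rintro _ ⟨a, ha, b, hb, rfl⟩
    exact add_le_add (le_csSup hs₁ ha) (le_csSup ht₁ hb)
  exact le_antisymm (csSup_le' hbound)
    (le_csSup ⟨_, hbound⟩ (Set.add_mem_add (Nat.sSup_mem hs₀ hs₁) (Nat.sSup_mem ht₀ ht₁)))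

namespace Finset

variable {ι α β : Type*} [Fintype α] [Fintype β] [DecidableEq α] [DecidableEq β]

theorem toLeft_inf (s : Finset ι) (E : ι → Finset (α ⊕ β)) :
    (s.inf E).toLeft = s.inf fun i ↦ (E i).toLeft := by
  ext x; simp [mem_inf]

theorem toRight_inf (s : Finset ι) (E : ι → Finset (α ⊕ β)) :
    (s.inf E).toRight = s.inf fun i ↦ (E i).toRight := by
  ext x; simp [mem_inf]

end Finset

section Join

variable {α β : Type*} (G : SimpleGraph α) (H : SimpleGraph β)

@[simp] theorem graphJoin_adj_inl_inl {x y : α} :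
    (graphJoin G H).Adj (.inl x) (.inl y) ↔ G.Adj x y := by
  simp only [graphJoin, SimpleGraph.fromRel_adj, ne_eq, Sum.inl.injEq]
  exact ⟨fun ⟨_, h⟩ ↦ h.elim id G.adj_symm, fun h ↦ ⟨h.ne, .inl h⟩⟩

@[simp] theorem graphJoin_adj_inr_inr {x y : β} :
    (graphJoin G H).Adj (.inr x) (.inr y) ↔ H.Adj x y := by
  simp only [graphJoin, SimpleGraph.fromRel_adj, ne_eq, Sum.inr.injEq]
  exact ⟨fun ⟨_, h⟩ ↦ h.elim id H.adj_symm, fun h ↦ ⟨h.ne, .inl h⟩⟩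

@[simp] theorem graphJoin_adj_inl_inr {x : α} {y : β} :
    (graphJoin G H).Adj (.inl x) (.inr y) := by
  simp [graphJoin]

@[simp] theorem graphJoin_adj_inr_inl {x : β} {y : α} :
    (graphJoin G H).Adj (.inr x) (.inl y) := by
  simp [graphJoin]

theorem isClique_graphJoin_iff (u : Finset (α ⊕ β)) :
    (graphJoin G H).IsClique (u : Set (α ⊕ β)) ↔
      G.IsClique (u.toLeft : Set α) ∧ H.IsClique (u.toRight : Set β) := by
  simp only [SimpleGraph.isClique_iff, Set.Pairwise, mem_coe, mem_toLeft, mem_toRight]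
  refine ⟨fun h ↦ ⟨fun x hx y hy hxy ↦ ?_, fun x hx y hy hxy ↦ ?_⟩, fun ⟨hl, hr⟩ ↦ ?_⟩
  · simpa using h hx hy (by simpa using hxy)
  · simpa using h hx hy (by simpa using hxy)
  · rintro (x | x) hx (y | y) hy hxy <;> simp_all

end Join

section CliqueSums

variable {V : Type*} [Fintype V] [DecidableEq V]

def cliqueSums (G : SimpleGraph V) (r : ℕ) : Set ℕ :=
  {m | ∃ C : Fin r → Finset V, (∀ i, G.IsClique (C i : Set V)) ∧
    Finset.univ.inf C = ∅ ∧ m = ∑ i, (C i).card}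

theorem zr_eq_sSup_cliqueSums (G : SimpleGraph V) (r : ℕ) : zr G r = sSup (cliqueSums G r) :=
  rfl

theorem cliqueSums_nonempty (G : SimpleGraph V) (r : ℕ) [NeZero r] :
    (cliqueSums G r).Nonempty :=
  ⟨0, fun _ ↦ ∅, fun _ ↦ by simp, inf_const univ_nonempty _, by simp⟩

theorem bddAbove_cliqueSums (G : SimpleGraph V) (r : ℕ) : BddAbove (cliqueSums G r) := by
  refine ⟨r * Fintype.card V, ?_⟩
  rintro _ ⟨C, -, -, rfl⟩
  simpa using sum_le_sum fun i (_ : i ∈ univ) ↦ card_le_univ (C i)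

end CliqueSums

theorem cliqueSums_graphJoin {α β : Type*} [Fintype α] [Fintype β] [DecidableEq α]
    [DecidableEq β] (G : SimpleGraph α) (H : SimpleGraph β) (r : ℕ) :
    cliqueSums (graphJoin G H) r = cliqueSums G r + cliqueSums H r := by
  have inf_eq_empty_iff (E : Fin r → Finset (α ⊕ β)) : univ.inf E = ∅ ↔
      (univ.inf fun i ↦ (E i).toLeft) = ∅ ∧ (univ.inf fun i ↦ (E i).toRight) = ∅ := by
    rw [← toLeft_inf, ← toRight_inf, ← disjSum_eq_empty, toLeft_disjSum_toRight]
  ext m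
  constructor
  · rintro ⟨E, hE, hEinf, rfl⟩
    have hE' i := (isClique_graphJoin_iff G H (E i)).1 (hE i)
    refine ⟨_, ⟨fun i ↦ (E i).toLeft, fun i ↦ (hE' i).1, ((inf_eq_empty_iff E).1 hEinf).1, rfl⟩,
      _, ⟨fun i ↦ (E i).toRight, fun i ↦ (hE' i).2, ((inf_eq_empty_iff E).1 hEinf).2, rfl⟩, ?_⟩
    simp only [← sum_add_distrib, card_toLeft_add_card_toRight]
  · rintro ⟨_, ⟨C, hC, hCinf, rfl⟩, _, ⟨D, hD, hDinf, rfl⟩, rfl⟩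
    refine ⟨fun i ↦ (C i).disjSum (D i), fun i ↦ ?_, ?_, ?_⟩
    · simpa [isClique_graphJoin_iff] using ⟨hC i, hD i⟩
    · simpa [inf_eq_empty_iff] using ⟨hCinf, hDinf⟩
    · simp only [card_disjSum, sum_add_distrib]

/-- For the join of two graphs,
`z_r(Γ₁ * Γ₂) = z_r(Γ₁) + z_r(Γ₂)` for all `r ≥ 2`. -/
theorem stmt11 {α β : Type*} [Fintype α] [Fintype β] [DecidableEq α]
    [DecidableEq β] (G : SimpleGraph α) (H : SimpleGraph β) (r : ℕ) (hr : 2 ≤ r) :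
    zr (graphJoin G H) r = zr G r + zr H r := by
  have : NeZero r := ⟨by omega⟩
  simp only [zr_eq_sSup_cliqueSums, cliqueSums_graphJoin]
  exact Nat.sSup_add (cliqueSums_nonempty G r) (bddAbove_cliqueSums G r)
    (cliqueSums_nonempty H r) (bddAbove_cliqueSums H r)
end

section
/- Let Γ be a graph, v a vertex of Γ, and D_v(Γ) the double of Γ along St(v). Suppose no vertex of St(v) belongs to a clique of maximal cardinality of Γ. Then for all r ≥ 2, z_r(D_v(Γ)) = r·c(Γ), and moreover c(D_v(Γ)) = c(Γ). -/
noncomputable def maxClique {V : Type*} [Fintype V] [DecidableEq V]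
    (G : SimpleGraph V) : ℕ :=
  sSup {m | ∃ C : Finset V, G.IsClique (C : Set V) ∧ C.card = m}

/-- The star of `v`: `v` together with its neighbours. -/
def graphStar {V : Type*} (G : SimpleGraph V) (v : V) : Set V :=
  {u | u = v ∨ G.Adj v u}

/-- Vertex set of the double `D_v(Γ)`: a full copy of `V` together with a second
copy of the vertices outside the star of `v`. -/
def DoubleVert {V : Type*} (G : SimpleGraph V) (v : V) : Type _ :=
  V ⊕ {u : V // u ∉ graphStar G v}

/-- The double `D_v(Γ)` of `Γ` along the star of `v`: two copies of `Γ` glued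
along `St(v)`. -/
def graphDouble {V : Type*} (G : SimpleGraph V) (v : V) :
    SimpleGraph (DoubleVert G v) :=
  SimpleGraph.fromRel (fun a b =>
    match a, b with
    | Sum.inl x, Sum.inl y => G.Adj x y
    | Sum.inl x, Sum.inr y => x ∈ graphStar G v ∧ G.Adj x y.1
    | Sum.inr x, Sum.inl y => y ∈ graphStar G v ∧ G.Adj y x.1
    | Sum.inr x, Sum.inr y => G.Adj x.1 y.1)

noncomputable instance {V : Type*} [Fintype V] (G : SimpleGraph V) (v : V) :
    Fintype (DoubleVert G v) := by
  classical exact inferInstanceAs (Fintype (V ⊕ {u : V // u ∉ graphStar G v}))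

instance {V : Type*} [DecidableEq V] (G : SimpleGraph V) (v : V) :
    DecidableEq (DoubleVert G v) := by
  classical exact inferInstanceAs (DecidableEq (V ⊕ {u : V // u ∉ graphStar G v}))

/-!
Forgetting which copy a vertex lies in is a graph homomorphism `D_v(Γ) → Γ`, and graph
homomorphisms are injective on cliques, so no clique of the double is larger than `c(Γ)`;
this bounds `c(D_v(Γ))` by `c(Γ)` and `z_r(D_v(Γ))` by `r·c(Γ)`. Conversely `Γ` sits in its
double in two ways that share exactly `St(v)`. A maximum clique `K` of `Γ` avoids `St(v)`, so
its two copies `K₁, K₂` are disjoint, and the `r`-tuple `(K₁, K₂, …, K₂)` realises `r·c(Γ)`.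
-/

namespace SimpleGraph

variable {α β : Type*} {G : SimpleGraph α} {H : SimpleGraph β}

theorem IsClique.injOn_hom {s : Set α} (hs : G.IsClique s) (f : G →g H) : Set.InjOn f s := by
  intro x hx y hy hxy
  by_contra hne
  exact H.irrefl (hxy ▸ f.map_rel (hs hx hy hne))

theorem IsClique.image_hom {s : Set α} (hs : G.IsClique s) (f : G →g H) :
    H.IsClique (f '' s) := by
  rintro _ ⟨x, hx, rfl⟩ _ ⟨y, hy, rfl⟩ hne
  exact f.map_rel (hs hx hy fun h => hne (h ▸ rfl))

variable [DecidableEq β]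

theorem IsClique.finsetImage_hom {s : Finset α} (hs : G.IsClique (s : Set α)) (f : G →g H) :
    H.IsClique ((s.image f : Finset β) : Set β) := by
  simpa only [Finset.coe_image] using hs.image_hom f

theorem IsClique.card_image_hom {s : Finset α} (hs : G.IsClique (s : Set α)) (f : G →g H) :
    (s.image f).card = s.card :=
  Finset.card_image_of_injOn (hs.injOn_hom f)

theorem cliqueNum_le_of_hom [Finite β] (f : G →g H) : G.cliqueNum ≤ H.cliqueNum := by
  obtain ⟨s, hs⟩ := G.exists_isNClique_cliqueNum
  rw [← hs.card_eq, ← hs.isClique.card_image_hom f]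
  exact IsClique.card_le_cliqueNum (tc := hs.isClique.finsetImage_hom f)

end SimpleGraph

open SimpleGraph

section CliqueNumbers

variable {V : Type*} [Fintype V] {G : SimpleGraph V}

theorem sum_card_le_mul_cliqueNum {r : ℕ} {C : Fin r → Finset V}
    (hC : ∀ i, G.IsClique (C i : Set V)) : ∑ i, (C i).card ≤ r * G.cliqueNum := by
  calc ∑ i, (C i).card ≤ ∑ _i : Fin r, G.cliqueNum :=
        Finset.sum_le_sum fun i _ => IsClique.card_le_cliqueNum (tc := hC i)
    _ = r * G.cliqueNum := by simp

variable [DecidableEq V]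

theorem maxClique_eq_cliqueNum (G : SimpleGraph V) : maxClique G = G.cliqueNum := by
  simp only [maxClique, cliqueNum, isNClique_iff]

theorem zr_le_mul_cliqueNum (r : ℕ) : zr G r ≤ r * G.cliqueNum :=
  csSup_le' <| by
    rintro _ ⟨C, hC, -, rfl⟩
    exact sum_card_le_mul_cliqueNum hC

/-- Witnessed by the `r`-tuple `(A, B, …, B)`, whose intersection is `A ∩ B = ∅` since `r ≥ 2`. -/
theorem mul_le_zr {r k : ℕ} (hr : 2 ≤ r) {A B : Finset V} (hA : G.IsClique (A : Set V))
    (hB : G.IsClique (B : Set V)) (hAB : Disjoint A B) (hAk : A.card = k) (hBk : B.card = k) :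
    r * k ≤ zr G r := by
  let C : Fin r → Finset V := fun i => if i.val = 0 then A else B
  have hC : ∀ i, G.IsClique (C i : Set V) := fun i => by
    by_cases h : i.val = 0 <;> simp only [C, h, if_true, if_false, hA, hB]
  have hinf : Finset.univ.inf C = ∅ := by
    have hleA : Finset.univ.inf C ≤ A :=
      (Finset.inf_le (Finset.mem_univ (⟨0, by omega⟩ : Fin r))).trans_eq (if_pos rfl)
    have hleB : Finset.univ.inf C ≤ B :=
      (Finset.inf_le (Finset.mem_univ (⟨1, by omega⟩ : Fin r))).trans_eq (if_neg one_ne_zero)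
    exact le_bot_iff.mp (hAB hleA hleB)
  have hsum : ∑ i, (C i).card = r * k := by
    have hcard : ∀ i, (C i).card = k := fun i => by
      by_cases h : i.val = 0 <;> simp only [C, h, if_true, if_false, hAk, hBk]
    simp [hcard]
  refine le_csSup ⟨r * G.cliqueNum, ?_⟩ ⟨C, hC, hinf, hsum.symm⟩
  rintro _ ⟨C', hC', -, rfl⟩
  exact sum_card_le_mul_cliqueNum hC'

end CliqueNumbers

namespace graphDouble

variable {V : Type*} (G : SimpleGraph V) (v : V)

def proj : graphDouble G v →g G where
  toFun := Sum.elim id Subtype.val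
  map_rel' {a b} h := by
    rw [graphDouble, fromRel_adj] at h
    obtain ⟨-, h | h⟩ := h <;> cases a <;> cases b
    all_goals first | exact h | exact h.2 | exact h.symm | exact h.2.symm

def firstCopy : G →g graphDouble G v where
  toFun x := Sum.inl x
  map_rel' h := (fromRel_adj _ _ _).2 ⟨fun hxy => h.ne (congrArg (proj G v) hxy), Or.inl h⟩

open Classical in
noncomputable def secondCopyFun (x : V) : DoubleVert G v :=
  if hx : x ∈ graphStar G v then Sum.inl x else Sum.inr ⟨x, hx⟩

theorem secondCopyFun_of_mem {x : V} (hx : x ∈ graphStar G v) :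
    secondCopyFun G v x = Sum.inl x :=
  dif_pos hx

theorem secondCopyFun_of_notMem {x : V} (hx : x ∉ graphStar G v) :
    secondCopyFun G v x = Sum.inr ⟨x, hx⟩ :=
  dif_neg hx

theorem proj_secondCopyFun (x : V) : proj G v (secondCopyFun G v x) = x := by
  by_cases hx : x ∈ graphStar G v
  · rw [secondCopyFun_of_mem G v hx]
    rfl
  · rw [secondCopyFun_of_notMem G v hx]
    rfl

/-- The second copy of `G` in its double: vertices of the star are shared with the first copy. -/
noncomputable def secondCopy : G →g graphDouble G v where
  toFun := secondCopyFun G v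
  map_rel' {x y} h := by
    refine (fromRel_adj _ _ _).2 ⟨fun hxy => h.ne ?_, ?_⟩
    · simpa only [proj_secondCopyFun] using congrArg (proj G v) hxy
    by_cases hx : x ∈ graphStar G v <;> by_cases hy : y ∈ graphStar G v
    · rw [secondCopyFun_of_mem G v hx, secondCopyFun_of_mem G v hy]
      exact Or.inl h
    · rw [secondCopyFun_of_mem G v hx, secondCopyFun_of_notMem G v hy]
      exact Or.inl ⟨hx, h⟩
    · rw [secondCopyFun_of_notMem G v hx, secondCopyFun_of_mem G v hy]
      exact Or.inr ⟨hy, h.symm⟩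
    · rw [secondCopyFun_of_notMem G v hx, secondCopyFun_of_notMem G v hy]
      exact Or.inl h

theorem secondCopy_of_notMem {x : V} (hx : x ∉ graphStar G v) :
    secondCopy G v x = Sum.inr ⟨x, hx⟩ :=
  secondCopyFun_of_notMem G v hx

variable [DecidableEq V]

theorem disjoint_image_firstCopy_secondCopy {K : Finset V}
    (hK : ∀ x ∈ K, x ∉ graphStar G v) :
    Disjoint (K.image (firstCopy G v)) (K.image (secondCopy G v)) := by
  refine Finset.disjoint_left.mpr ?_
  rintro _ hfirst hsecond
  obtain ⟨x, -, rfl⟩ := Finset.mem_image.mp hfirst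
  obtain ⟨y, hy, hxy⟩ := Finset.mem_image.mp hsecond
  rw [secondCopy_of_notMem G v (hK y hy)] at hxy
  cases hxy

variable [Fintype V]

theorem cliqueNum_eq : (graphDouble G v).cliqueNum = G.cliqueNum := by
  refine le_antisymm (cliqueNum_le_of_hom (proj G v)) ?_
  obtain ⟨K, hK⟩ := G.exists_isNClique_cliqueNum
  rw [← hK.card_eq, ← hK.isClique.card_image_hom (firstCopy G v)]
  exact IsClique.card_le_cliqueNum (tc := hK.isClique.finsetImage_hom _)

theorem mul_card_le_zr {r : ℕ} (hr : 2 ≤ r) {K : Finset V} (hK : G.IsClique (K : Set V))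
    (hKstar : ∀ x ∈ K, x ∉ graphStar G v) : r * K.card ≤ zr (graphDouble G v) r :=
  mul_le_zr hr (hK.finsetImage_hom _) (hK.finsetImage_hom _)
    (disjoint_image_firstCopy_secondCopy G v hKstar) (hK.card_image_hom _) (hK.card_image_hom _)

end graphDouble

/-- If no vertex of `St(v)` belongs to a clique of maximal
cardinality of `Γ`, then `z_r(D_v(Γ)) = r·c(Γ)` for all `r ≥ 2`, and
`c(D_v(Γ)) = c(Γ)`. -/
theorem stmt13 {V : Type*} [Fintype V] [DecidableEq V] (G : SimpleGraph V)
    (v : V)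
    (hstar : ∀ u ∈ graphStar G v, ∀ C : Finset V,
      G.IsClique (C : Set V) → C.card = maxClique G → u ∉ C) :
    (∀ r : ℕ, 2 ≤ r → zr (graphDouble G v) r = r * maxClique G) ∧
      maxClique (graphDouble G v) = maxClique G := by
  rw [maxClique_eq_cliqueNum, maxClique_eq_cliqueNum, graphDouble.cliqueNum_eq]
  refine ⟨fun r hr => le_antisymm ?_ ?_, rfl⟩
  · simpa only [graphDouble.cliqueNum_eq] using zr_le_mul_cliqueNum (G := graphDouble G v) r
  · obtain ⟨K, hK⟩ := G.exists_isNClique_cliqueNum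
    have hKstar : ∀ x ∈ K, x ∉ graphStar G v := fun x hx hxs =>
      hstar x hxs K hK.isClique (by rw [hK.card_eq, maxClique_eq_cliqueNum]) hx
    simpa only [hK.card_eq] using graphDouble.mul_card_le_zr G v hr hK.isClique hKstar
end

section
/- Let n ≥ 1 with n ∉ {1,3,7}, and let θ be such that 2^{θ−1} ≤ n < 2^θ. Then the mod-2 zero-divisors cup-length of P^n equals 2^θ − 1; that is, the maximal number of elements z_j in the kernel of the cup-product map H*(P^n; ℤ/2) ⊗ H*(P^n; ℤ/2) → H*(P^n; ℤ/2) whose product is nonzero equals 2^θ − 1. -/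
open TensorProduct

/-- The mod-2 cohomology ring of `ℝP^n`: the truncated polynomial ring
`(ℤ/2)[u]/(u^{n+1})`. -/
abbrev cohRP (n : ℕ) : Type :=
  Polynomial (ZMod 2) ⧸ Ideal.span {(Polynomial.X : Polynomial (ZMod 2)) ^ (n + 1)}

/-!
Since `u` generates `H = H^*(P^n; ℤ/2)`, the kernel of multiplication `H ⊗ H → H` is the
principal ideal generated by `z = u ⊗ 1 - 1 ⊗ u`. A product of `k` zero divisors is therefore a
multiple of `z ^ k`, and `z ^ 2^θ = u ^ 2^θ ⊗ 1 - 1 ⊗ u ^ 2^θ = 0` by the Frobenius. Conversely,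
with `k = 2^θ - 1` and `z = u ⊗ 1 + 1 ⊗ u` in characteristic two, the only term of the binomial
expansion of `z ^ k * (u ^ (2n - k) ⊗ 1)` that survives is `(k choose n) • u ^ n ⊗ u ^ n`, and by
Lucas' theorem every `2^θ - 1 choose j` with `j < 2^θ` is odd.
-/

open Polynomial

theorem Nat.odd_choose_two_pow_sub_one {θ j : ℕ} (hj : j < 2 ^ θ) :
    Odd ((2 ^ θ - 1).choose j) := by
  induction θ generalizing j with
  | zero => simp_all
  | succ θ ih =>
    have hlucas := Choose.choose_modEq_choose_mod_mul_choose_div_nat (p := 2)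
      (n := 2 ^ (θ + 1) - 1) (k := j)
    have hmod : (2 ^ (θ + 1) - 1) % 2 = 1 := by rw [pow_succ]; omega
    have hdiv : (2 ^ (θ + 1) - 1) / 2 = 2 ^ θ - 1 := by rw [pow_succ]; omega
    have hj2 : j / 2 < 2 ^ θ := by rw [pow_succ] at hj; omega
    rw [hmod, hdiv] at hlucas
    have : (1 : ℕ).choose (j % 2) = 1 := by
      rcases Nat.mod_two_eq_zero_or_one j with h | h <;> simp [h]
    rw [this, one_mul] at hlucas
    rw [Nat.odd_iff, hlucas, ← Nat.odd_iff]
    exact ih hj2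

section Diagonal

variable {R A : Type*} [CommRing R] [CommRing A] [Algebra R A]

theorem mul'_tmul_one_sub_one_tmul (x : A) :
    LinearMap.mul' R A (x ⊗ₜ 1 - 1 ⊗ₜ x) = 0 := by
  simp

theorem mem_span_tmul_one_sub_one_tmul_of_mul'_eq_zero {x : A}
    (hx : Algebra.adjoin R {x} = ⊤) {w : A ⊗[R] A} (hw : LinearMap.mul' R A w = 0) :
    w ∈ Ideal.span {x ⊗ₜ[R] 1 - 1 ⊗ₜ x} := by
  set q := Ideal.Quotient.mkₐ R (Ideal.span {x ⊗ₜ[R] (1 : A) - 1 ⊗ₜ x})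
  have hswap : q.comp Algebra.TensorProduct.includeLeft =
      q.comp Algebra.TensorProduct.includeRight := by
    refine AlgHom.ext_of_adjoin_eq_top hx ?_
    rintro _ rfl
    simp only [AlgHom.comp_apply, Algebra.TensorProduct.includeLeft_apply,
      Algebra.TensorProduct.includeRight_apply, q, Ideal.Quotient.mkₐ_eq_mk, Ideal.Quotient.eq]
    exact Ideal.subset_span rfl
  -- `q (a ⊗ b) = q (1 ⊗ a) * q (1 ⊗ b) = q (1 ⊗ a * b)`
  have hfactor : q = (q.comp Algebra.TensorProduct.includeRight).comp
      (Algebra.TensorProduct.lmul' R) := by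
    refine Algebra.TensorProduct.ext ?_ ?_
    · rw [AlgHom.comp_assoc, AlgHom.comp_assoc, Algebra.TensorProduct.lmul'_comp_includeLeft,
        AlgHom.comp_id, hswap]
    · ext a
      simp
  have : q w = 0 := by
    rw [hfactor, AlgHom.comp_apply, show Algebra.TensorProduct.lmul' R w = 0 from hw, map_zero]
  rwa [Ideal.Quotient.mkₐ_eq_mk, Ideal.Quotient.eq_zero_iff_mem] at this

theorem tmul_one_sub_one_tmul_pow_eq_zero (p : ℕ) [ExpChar (A ⊗[R] A) p] {θ : ℕ} {x : A}
    (hx : x ^ p ^ θ = 0) : (x ⊗ₜ[R] 1 - 1 ⊗ₜ x) ^ p ^ θ = 0 := by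
  rw [sub_pow_expChar_pow, Algebra.TensorProduct.tmul_pow, Algebra.TensorProduct.tmul_pow,
    one_pow, hx, zero_tmul, tmul_zero, sub_zero]

theorem tmul_one_add_one_tmul_pow_mul {x : A} {n k : ℕ} (hx : x ^ (n + 1) = 0)
    (hnk : n ≤ k) (hk : k ≤ 2 * n) :
    (x ⊗ₜ[R] 1 + 1 ⊗ₜ x) ^ k * ((x ^ (2 * n - k)) ⊗ₜ[R] (1 : A)) =
      k.choose n • ((x ^ n) ⊗ₜ[R] (x ^ n)) := by
  have hvanish : ∀ {i}, n < i → x ^ i = 0 := fun hi => pow_eq_zero_of_le hi hx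
  have hterm : ∀ m, (x ⊗ₜ[R] (1 : A)) ^ m * (1 ⊗ₜ x) ^ (k - m) * (k.choose m : A ⊗[R] A) *
      ((x ^ (2 * n - k)) ⊗ₜ[R] (1 : A)) =
        k.choose m • ((x ^ (m + (2 * n - k))) ⊗ₜ[R] (x ^ (k - m))) := by
    intro m
    rw [Algebra.TensorProduct.tmul_pow, Algebra.TensorProduct.tmul_pow, one_pow, one_pow,
      mul_right_comm, Algebra.TensorProduct.tmul_mul_tmul, Algebra.TensorProduct.tmul_mul_tmul,
      one_mul, mul_one, mul_one, pow_add, mul_comm, nsmul_eq_mul]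
  rw [add_pow, Finset.sum_mul, Finset.sum_congr rfl fun m _ => hterm m,
    Finset.sum_eq_single_of_mem (k - n) (Finset.mem_range.mpr (by omega))]
  · rw [Nat.choose_symm hnk, Nat.sub_sub_self hnk, show k - n + (2 * n - k) = n by omega]
  · intro m _ hm
    rcases lt_or_gt_of_ne hm with hlt | hgt
    · rw [hvanish (i := k - m) (by omega), tmul_zero, smul_zero]
    · rw [hvanish (i := m + (2 * n - k)) (by omega), zero_tmul, smul_zero]

end Diagonal

theorem Ideal.prod_eq_zero_of_mem_span_singleton {S : Type*} [CommRing S] {z : S} {m k : ℕ}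
    (hz : z ^ m = 0) (hk : m ≤ k) {w : Fin k → S} (hw : ∀ j, w j ∈ Ideal.span {z}) :
    ∏ j, w j = 0 := by
  have := Ideal.prod_mem_prod (s := Finset.univ) (I := fun _ => Ideal.span {z}) fun j _ => hw j
  rwa [Finset.prod_const, Finset.card_univ, Fintype.card_fin, Ideal.span_singleton_pow,
    pow_eq_zero_of_le hk hz, Ideal.span_singleton_eq_bot.mpr rfl, Ideal.mem_bot] at this

namespace AdjoinRoot

variable {R : Type*} [CommRing R]

theorem root_X_pow_pow_succ (n : ℕ) : root ((X : R[X]) ^ (n + 1)) ^ (n + 1) = 0 := by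
  rw [← mk_X, ← map_pow, mk_self]

theorem root_pow_tmul_root_pow_ne_zero [Nontrivial R] {n i j : ℕ} (hi : i ≤ n) (hj : j ≤ n) :
    (root ((X : R[X]) ^ (n + 1)) ^ i) ⊗ₜ[R] (root ((X : R[X]) ^ (n + 1)) ^ j) ≠ 0 := by
  set pb := powerBasis' (monic_X_pow (R := R) (n + 1))
  have hdim : pb.dim = n + 1 := by simp [pb]
  have := (pb.basis.tensorProduct pb.basis).ne_zero (⟨i, by omega⟩, ⟨j, by omega⟩)
  rwa [Module.Basis.tensorProduct_apply, PowerBasis.basis_eq_pow, PowerBasis.basis_eq_pow,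
    powerBasis'_gen] at this

end AdjoinRoot

section ModTwo

variable {n : ℕ}

local notation "𝔸" => AdjoinRoot ((X : (ZMod 2)[X]) ^ (n + 1))
local notation "𝔲" => AdjoinRoot.root ((X : (ZMod 2)[X]) ^ (n + 1))

instance : CharP (𝔸 ⊗[ZMod 2] 𝔸) 2 :=
  have : Nontrivial (𝔸 ⊗[ZMod 2] 𝔸) :=
    ⟨_, 0, AdjoinRoot.root_pow_tmul_root_pow_ne_zero (Nat.zero_le n) (Nat.zero_le n)⟩
  charP_of_injective_algebraMap' (ZMod 2) 2

theorem tmul_one_sub_one_tmul_root_pow_ne_zero {θ : ℕ} (hθ₁ : 2 ^ (θ - 1) ≤ n)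
    (hθ₂ : n < 2 ^ θ) :
    (𝔲 ⊗ₜ[ZMod 2] 1 - 1 ⊗ₜ 𝔲) ^ (2 ^ θ - 1) ≠ 0 := by
  intro h
  have hk : 2 ^ θ - 1 ≤ 2 * n := by
    have : 2 ^ θ ≤ 2 * 2 ^ (θ - 1) := by
      rw [← pow_succ']; exact Nat.pow_le_pow_right two_pos (by omega)
    omega
  have := tmul_one_add_one_tmul_pow_mul (R := ZMod 2)
    (AdjoinRoot.root_X_pow_pow_succ (R := ZMod 2) n) (by omega) hk
  rw [← CharTwo.sub_eq_add, h, zero_mul, ← Nat.cast_smul_eq_nsmul (ZMod 2),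
    (Nat.odd_choose_two_pow_sub_one hθ₂).natCast_zmod_two, one_smul] at this
  exact AdjoinRoot.root_pow_tmul_root_pow_ne_zero le_rfl le_rfl this.symm

end ModTwo

theorem stmt17_general (n : ℕ) (θ : ℕ) (hθ₁ : 2 ^ (θ - 1) ≤ n) (hθ₂ : n < 2 ^ θ) :
    sSup {k : ℕ | ∃ z : Fin k → (cohRP n ⊗[ZMod 2] cohRP n),
        (∀ j, LinearMap.mul' (ZMod 2) (cohRP n) (z j) = 0) ∧
        (∏ j, z j) ≠ 0} = 2 ^ θ - 1 := by
  set x := AdjoinRoot.root ((X : (ZMod 2)[X]) ^ (n + 1))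
  have hx : x ^ 2 ^ θ = 0 := pow_eq_zero_of_le hθ₂ (AdjoinRoot.root_X_pow_pow_succ n)
  refine IsGreatest.csSup_eq
    ⟨⟨fun _ => x ⊗ₜ 1 - 1 ⊗ₜ x, fun _ => mul'_tmul_one_sub_one_tmul x, ?_⟩, ?_⟩
  · rw [Finset.prod_const, Finset.card_univ, Fintype.card_fin]
    exact tmul_one_sub_one_tmul_root_pow_ne_zero hθ₁ hθ₂
  · rintro k ⟨w, hw, hprod⟩
    by_contra! hk
    exact hprod <| Ideal.prod_eq_zero_of_mem_span_singleton
      (tmul_one_sub_one_tmul_pow_eq_zero 2 hx) (by omega) fun j =>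
        mem_span_tmul_one_sub_one_tmul_of_mul'_eq_zero AdjoinRoot.adjoinRoot_eq_top (hw j)

/-- For `n ≥ 1` with `n ∉ {1,3,7}` and `2^{θ−1} ≤ n < 2^θ`, the
mod-2 zero-divisors cup-length of `P^n` — the maximal number of elements of the
kernel of the multiplication map `H ⊗ H → H`, `H = H^*(P^n; ℤ/2)`, with nonzero
product — equals `2^θ − 1`. -/
theorem stmt17 (n : ℕ) (hn : 1 ≤ n) (h1 : n ≠ 1) (h3 : n ≠ 3) (h7 : n ≠ 7)
    (θ : ℕ) (hθ₁ : 2 ^ (θ - 1) ≤ n) (hθ₂ : n < 2 ^ θ) :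
    sSup {k : ℕ | ∃ z : Fin k → (cohRP n ⊗[ZMod 2] cohRP n),
        (∀ j, LinearMap.mul' (ZMod 2) (cohRP n) (z j) = 0) ∧
        (∏ j, z j) ≠ 0} = 2 ^ θ - 1 :=
  stmt17_general n θ hθ₁ hθ₂
end
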